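/- arXiv:1910.00205 — 3 statements merged into one kernel-verified Lean document; each statement's English description precedes it below -/
import Mathlib

section
/- Let $b_l > 0$, $w_l > 0$ for $l=1,\dots,M$, with $\sum_{i=1}^M b_i \geq 1$, let $\beta^\star$ satisfy $\sum_{i=1}^M \min\{b_i, \beta^\star\sqrt{w_i}\} = 1$, let $\epsilon > 0$, and let $x^\star = -\tfrac12 + \sqrt{\tfrac14 + \tfrac1\epsilon}$. Then the vector $r_l^\star = \min\{b_l, \beta^\star\sqrt{w_l}\}\, x^\star$ satisfies, for every $l$, $\big([1 - e^{-r_l^\star\epsilon}]\sum_{i=1}^M r_i^\star + r_l^\star e^{-r_l^\star\epsilon}\big)/\big(\sum_{i=1}^M r_i^\star + 1\big) \leq b_l$. -/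
/-!
Since `β⋆ > 0`, each `m := min(b_l, β⋆ √w_l)` lies in `[0, b_l]`, and `∑ r⋆ = x⋆` where `x⋆` is the
positive root of `x (x + 1) ε = 1`. Writing `E = exp(-m x⋆ ε)`, the constraint reduces to
`x⋆ (1 - E)(1 - m) ≤ m`. For `m ≥ 1` the left side is nonpositive; for `m < 1` the bound
`1 - E ≤ m x⋆ ε` gives `x⋆ (1 - E)(1 - m) ≤ m x⋆² ε ≤ m x⋆ (x⋆ + 1) ε = m`.
-/

open Real

lemma pos_of_sum_min_mul_eq_one {ι : Type*} (s : Finset ι) (b c : ι → ℝ) (hc : ∀ i, 0 ≤ c i)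
    {β : ℝ} (h : ∑ i ∈ s, min (b i) (β * c i) = 1) : 0 < β := by
  by_contra! hβ
  have : ∑ i ∈ s, min (b i) (β * c i) ≤ 0 :=
    Finset.sum_nonpos fun i _ => (min_le_right _ _).trans (mul_nonpos_of_nonpos_of_nonneg hβ (hc i))
  linarith

lemma neg_half_add_sqrt_quarter_add_inv_spec {ε : ℝ} (hε : 0 < ε) :
    0 ≤ -(1/2 : ℝ) + √(1/4 + 1/ε) ∧
      (-(1/2 : ℝ) + √(1/4 + 1/ε)) * (-(1/2 : ℝ) + √(1/4 + 1/ε) + 1) * ε = 1 := by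
  have hinv : 0 < 1/ε := by positivity
  have hsq : √(1/4 + 1/ε) ^ 2 = 1/4 + 1/ε := sq_sqrt (by positivity)
  refine ⟨?_, ?_⟩
  · nlinarith [sqrt_nonneg (1/4 + 1/ε)]
  · have hroot : (-(1/2 : ℝ) + √(1/4 + 1/ε)) * (-(1/2 : ℝ) + √(1/4 + 1/ε) + 1) = 1/ε := by
      nlinarith
    rw [hroot, one_div_mul_cancel hε.ne']

lemma one_sub_exp_neg_le (t : ℝ) : 1 - exp (-t) ≤ t := by
  linarith [add_one_le_exp (-t)]

lemma mul_one_sub_exp_mul_one_sub_le {m x ε : ℝ} (hm : 0 ≤ m) (hx : 0 ≤ x)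
    (hroot : x * (x + 1) * ε = 1) :
    x * (1 - exp (-(m * x * ε))) * (1 - m) ≤ m := by
  have hε : 0 ≤ ε := by nlinarith [mul_nonneg hx (by linarith : 0 ≤ x + 1)]
  rcases le_or_gt m 1 with hm1 | hm1
  · calc x * (1 - exp (-(m * x * ε))) * (1 - m)
        ≤ x * (m * x * ε) * (1 - m) := by
          gcongr
          exact one_sub_exp_neg_le _
      _ ≤ m * (x * (x + 1) * ε) := by
          nlinarith [mul_nonneg (mul_nonneg hm (mul_nonneg hx hx)) hε, mul_nonneg hm hx,
            mul_nonneg (mul_nonneg hm hx) hε]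
      _ = m := by rw [hroot, mul_one]
  · have hE : exp (-(m * x * ε)) ≤ 1 := exp_le_one_iff.2 (by simp only [neg_nonpos]; positivity)
    nlinarith [mul_nonneg hx (sub_nonneg.2 hE)]

lemma one_sub_exp_mul_add_mul_exp_div_le {m x ε : ℝ} (hm : 0 ≤ m) (hx : 0 ≤ x)
    (hroot : x * (x + 1) * ε = 1) :
    ((1 - exp (-(m * x * ε))) * x + m * x * exp (-(m * x * ε))) / (x + 1) ≤ m := by
  rw [div_le_iff₀ (by linarith)]
  nlinarith [mul_one_sub_exp_mul_one_sub_le hm hx hroot]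

theorem proposed_solution_feasible_general (M : ℕ)
    (b w : Fin M → ℝ) (hb : ∀ l, 0 < b l)
    (βs : ℝ) (hβ : ∑ i, min (b i) (βs * Real.sqrt (w i)) = 1)
    (ε : ℝ) (hε : 0 < ε)
    (xs : ℝ) (hxs : xs = -(1/2 : ℝ) + Real.sqrt (1/4 + 1/ε))
    (rs : Fin M → ℝ) (hrs : ∀ l, rs l = min (b l) (βs * Real.sqrt (w l)) * xs) :
    ∀ l, ((1 - Real.exp (-(rs l * ε))) * ∑ i, rs i
          + rs l * Real.exp (-(rs l * ε))) / (∑ i, rs i + 1) ≤ b l := by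
  intro l
  obtain ⟨hxs0, hroot⟩ := neg_half_add_sqrt_quarter_add_inv_spec hε
  rw [← hxs] at hxs0 hroot
  have hβs := pos_of_sum_min_mul_eq_one _ b _ (fun i => sqrt_nonneg (w i)) hβ
  have hsum_rs : ∑ i, rs i = xs := by
    simp_rw [hrs, ← Finset.sum_mul, hβ, one_mul]
  have hm : 0 ≤ min (b l) (βs * √(w l)) := le_min (hb l).le (by positivity)
  rw [hsum_rs, hrs l]
  exact (one_sub_exp_mul_add_mul_exp_div_le hm hxs0 hroot).trans (min_le_left _ _)

theorem proposed_solution_feasible (M : ℕ) (hM : 0 < M)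
    (b w : Fin M → ℝ) (hb : ∀ l, 0 < b l) (hw : ∀ l, 0 < w l)
    (hsum : 1 ≤ ∑ i, b i)
    (βs : ℝ) (hβ : ∑ i, min (b i) (βs * Real.sqrt (w i)) = 1)
    (ε : ℝ) (hε : 0 < ε)
    (xs : ℝ) (hxs : xs = -(1/2 : ℝ) + Real.sqrt (1/4 + 1/ε))
    (rs : Fin M → ℝ) (hrs : ∀ l, rs l = min (b l) (βs * Real.sqrt (w l)) * xs) :
    ∀ l, ((1 - Real.exp (-(rs l * ε))) * ∑ i, rs i
          + rs l * Real.exp (-(rs l * ε))) / (∑ i, rs i + 1) ≤ b l :=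
  proposed_solution_feasible_general M b w hb βs hβ ε hε xs hxs rs hrs
end

section
/- Let $w_1,\dots,w_M > 0$ and $b_1,\dots,b_M > 0$ with $\sum_{i=1}^M b_i \geq 1$. Consider minimizing $\sum_{i=1}^M (w_i/a_i + w_i)$ over probability vectors $a_i > 0$ with $\sum_i a_i = 1$ and $a_l \leq b_l$ for all $l$. The optimal solution is $a_l = \min\{b_l, \beta^\star \sqrt{w_l}\}$ where $\beta^\star$ solves $\sum_i \min\{b_i, \beta^\star\sqrt{w_i}\} = 1$, and the optimal value is $\sum_{i=1}^M \left[\frac{w_i}{\min\{b_i, \beta^\star\sqrt{w_i}\}} + w_i\right]$. -/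
/-! The problem is convex and `1 / β^2` is the Lagrange multiplier of `∑ i, a i = 1`. Writing
`A i = min (b i) (β * √(w i))`, the tangent line of `x ↦ w / x` at `A i` bounds `w i / a i` from below
with slope `-w i / (A i)^2`, which equals `-1 / β^2` where `A i < b i` and is at most `-1 / β^2` where
the cap `A i = b i` is active (and there `a i ≤ A i`). So `w i / a i ≥ w i / A i + (A i - a i) / β^2`
for every feasible `a`, and the correction terms cancel after summing since `∑ A = ∑ a = 1`. -/

open Finset Real

lemma div_sub_mul_sub_le_div {w A a : ℝ} (hw : 0 ≤ w) (hA : 0 < A) (ha : 0 < a) :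
    w / A - w / A ^ 2 * (a - A) ≤ w / a := by
  have gap : w / a - (w / A - w / A ^ 2 * (a - A)) = w * (a - A) ^ 2 / (a * A ^ 2) := by
    field_simp
    ring
  have : 0 ≤ w * (a - A) ^ 2 / (a * A ^ 2) := by positivity
  linarith

lemma pos_of_sum_min_mul_sqrt_eq_one {ι : Type*} [Fintype ι] {b w : ι → ℝ} {β : ℝ}
    (h : ∑ i, min (b i) (β * √(w i)) = 1) : 0 < β := by
  by_contra! hβ
  have : ∑ i, min (b i) (β * √(w i)) ≤ 0 :=
    sum_nonpos fun i _ => min_le_of_right_le (mul_nonpos_of_nonpos_of_nonneg hβ (sqrt_nonneg _))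
  linarith

lemma div_min_add_sub_div_le_div {w b a β : ℝ} (hw : 0 < w) (hβ : 0 < β) (ha : 0 < a)
    (hab : a ≤ b) :
    w / min b (β * √w) + (min b (β * √w) - a) / β ^ 2 ≤ w / a := by
  set A := min b (β * √w)
  have hA : 0 < A := lt_min (ha.trans_le hab) (mul_pos hβ (sqrt_pos.2 hw))
  have slope : w / A ^ 2 * (a - A) ≤ (a - A) / β ^ 2 := by
    rcases min_cases b (β * √w) with ⟨hAb, -⟩ | ⟨hAβ, -⟩
    · have hsq : A ^ 2 ≤ β ^ 2 * w := by
        calc A ^ 2 ≤ (β * √w) ^ 2 := pow_le_pow_left₀ hA.le (min_le_right _ _) 2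
          _ = β ^ 2 * w := by rw [mul_pow, sq_sqrt hw.le]
      have hc : 1 / β ^ 2 ≤ w / A ^ 2 := by
        rw [div_le_div_iff₀ (by positivity) (by positivity)]
        linarith
      have : a - A ≤ 0 := by linarith [show A = b from hAb]
      rw [div_eq_mul_one_div (a - A)]
      nlinarith
    · have : w / A ^ 2 = 1 / β ^ 2 := by
        rw [show A = β * √w from hAβ, mul_pow, sq_sqrt hw.le]
        field_simp
      rw [this, one_div_mul_eq_div]
  have := div_sub_mul_sub_le_div hw.le hA ha
  rw [← neg_sub A a, neg_div] at slope
  linarith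

theorem sum_div_min_add_le {ι : Type*} [Fintype ι] {w b a : ι → ℝ} {β : ℝ}
    (hw : ∀ i, 0 < w i) (hβ : ∑ i, min (b i) (β * √(w i)) = 1) (ha : ∀ i, 0 < a i)
    (hab : ∀ i, a i ≤ b i) (hasum : ∑ i, a i = 1) :
    ∑ i, (w i / min (b i) (β * √(w i)) + w i) ≤ ∑ i, (w i / a i + w i) := by
  have hβ0 := pos_of_sum_min_mul_sqrt_eq_one hβ
  have hcancel : ∑ i, (min (b i) (β * √(w i)) - a i) / β ^ 2 = 0 := by
    rw [← sum_div, sum_sub_distrib, hβ, hasum, sub_self, zero_div]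
  calc ∑ i, (w i / min (b i) (β * √(w i)) + w i)
      = ∑ i, (w i / min (b i) (β * √(w i)) + w i + (min (b i) (β * √(w i)) - a i) / β ^ 2) := by
        rw [sum_add_distrib (f := fun i => w i / _ + w i), hcancel, add_zero]
    _ ≤ ∑ i, (w i / a i + w i) := sum_le_sum fun i _ => by
        linarith [div_min_add_sub_div_le_div (hw i) hβ0 (ha i) (hab i)]

theorem synchronized_scheduler_optimal_general (M : ℕ)
    (w b : Fin M → ℝ) (hw : ∀ i, 0 < w i) (hb : ∀ i, 0 < b i)
    (βs : ℝ) (hβ : ∑ i, min (b i) (βs * Real.sqrt (w i)) = 1) :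
    (∀ l, 0 < min (b l) (βs * Real.sqrt (w l))) ∧
    (∀ l, min (b l) (βs * Real.sqrt (w l)) ≤ b l) ∧
    (∑ i, min (b i) (βs * Real.sqrt (w i)) = 1) ∧
    (∀ a : Fin M → ℝ, (∀ i, 0 < a i) → (∀ l, a l ≤ b l) →
      (∑ i, a i = 1) →
      ∑ i, (w i / min (b i) (βs * Real.sqrt (w i)) + w i)
        ≤ ∑ i, (w i / a i + w i)) := by
  have hβ0 := pos_of_sum_min_mul_sqrt_eq_one hβ
  exact ⟨fun l => lt_min (hb l) (mul_pos hβ0 (sqrt_pos.2 (hw l))), fun l => min_le_left _ _, hβ,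
    fun a ha hab hasum => sum_div_min_add_le hw hβ ha hab hasum⟩

theorem synchronized_scheduler_optimal (M : ℕ) (hM : 0 < M)
    (w b : Fin M → ℝ) (hw : ∀ i, 0 < w i) (hb : ∀ i, 0 < b i)
    (hsum : 1 ≤ ∑ i, b i)
    (βs : ℝ) (hβ : ∑ i, min (b i) (βs * Real.sqrt (w i)) = 1) :
    (∀ l, 0 < min (b l) (βs * Real.sqrt (w l))) ∧
    (∀ l, min (b l) (βs * Real.sqrt (w l)) ≤ b l) ∧
    (∑ i, min (b i) (βs * Real.sqrt (w i)) = 1) ∧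
    (∀ a : Fin M → ℝ, (∀ i, 0 < a i) → (∀ l, a l ≤ b l) →
      (∑ i, a i = 1) →
      ∑ i, (w i / min (b i) (βs * Real.sqrt (w i)) + w i)
        ≤ ∑ i, (w i / a i + w i)) :=
  synchronized_scheduler_optimal_general M w b hw hb βs hβ
end

section
/- Let $S_1,\dots,S_M$ be independent exponential random variables where $S_i$ has mean $\mathbb{E}[T]/r_i$ ($r_i > 0$, $\mathbb{E}[T] > 0$), and let $t_s \geq 0$. Then $\mathbb{P}(S_i \geq S_l - t_s \text{ for all } i \neq l) = 1 - e^{-r_l t_s/\mathbb{E}[T]} + e^{-r_l t_s/\mathbb{E}[T]} \frac{r_l}{\sum_{i=1}^M r_i}$. -/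
/-!
Project the joint law, which by independence is the product of the exponential laws, onto the
coordinate `l` and integrate over `s = S l`. Given `S l = s`, the event asks every other `S i`
to be at least `s - ts`; a product of exponential tails is the tail `exp (-c (s - ts)⁺)` with the
summed rate `c`. Integrating against the density of `S l`, the part `s ≤ ts` contributes
`P(S l ≤ ts)`, and on `s > ts` the integrand `b e^{-bs} e^{-c(s - ts)}` is a multiple of the
exponential density of rate `b + c`, whose tail beyond `ts` gives the factor `b / (b + c)`.
-/

open MeasureTheory ProbabilityTheory Real Set

namespace ProbabilityTheory

lemma expMeasure_eq_withDensity (b : ℝ) :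
    expMeasure b = volume.withDensity (exponentialPDF b) := rfl

instance nullSingletonClass_expMeasure (b : ℝ) : NullSingletonClass (expMeasure b) := by
  rw [expMeasure_eq_withDensity]; infer_instance

lemma measurable_exponentialPDF (b : ℝ) : Measurable (exponentialPDF b) :=
  (measurable_exponentialPDFReal b).ennreal_ofReal

lemma expMeasure_Ici {b : ℝ} (hb : 0 < b) (x : ℝ) :
    expMeasure b (Ici x) = ENNReal.ofReal (rexp (-(b * max x 0))) := by
  have := isProbabilityMeasure_expMeasure hb
  rw [← compl_Iio, prob_compl_eq_one_sub measurableSet_Iio, measure_congr Iio_ae_eq_Iic,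
    ← ofReal_cdf, ← ENNReal.ofReal_one, ← ENNReal.ofReal_sub _ (cdf_nonneg _ x),
    cdf_expMeasure_eq hb]
  split_ifs with hx
  · rw [max_eq_left hx, sub_sub_cancel]
  · rw [max_eq_right (not_le.1 hx).le]; simp

lemma prod_expMeasure_Ici {ι : Type*} [Fintype ι] {b : ι → ℝ} (hb : ∀ i, 0 < b i)
    (x : ℝ) :
    ∏ i, expMeasure (b i) (Ici x) = ENNReal.ofReal (rexp (-((∑ i, b i) * max x 0))) := by
  simp_rw [expMeasure_Ici (hb _), ← ENNReal.ofReal_prod_of_nonneg (fun i _ => (exp_pos _).le),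
    ← exp_sum, Finset.sum_mul, Finset.sum_neg_distrib]

lemma setLIntegral_Ioi_exp_neg_mul_sub_expMeasure {b c t : ℝ} (hb : 0 < b) (hc : 0 ≤ c)
    (ht : 0 ≤ t) :
    ∫⁻ s in Ioi t, ENNReal.ofReal (rexp (-(c * (s - t)))) ∂expMeasure b
      = ENNReal.ofReal (rexp (-(b * t)) * (b / (b + c))) := by
  have hbc : 0 < b + c := by linarith
  have htilt : ∀ s ∈ Ioi t, exponentialPDF b s * ENNReal.ofReal (rexp (-(c * (s - t))))
      = ENNReal.ofReal (b / (b + c) * rexp (c * t)) * exponentialPDF (b + c) s := by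
    intro s hs
    rw [exponentialPDF_of_nonneg (ht.trans hs.out.le),
      exponentialPDF_of_nonneg (ht.trans hs.out.le),
      ← ENNReal.ofReal_mul (by positivity), ← ENNReal.ofReal_mul (by positivity)]
    have hexp :
        rexp (-(b * s)) * rexp (-(c * (s - t))) = rexp (c * t) * rexp (-((b + c) * s)) := by
      rw [← exp_add, ← exp_add]; ring_nf
    congr 1
    rw [mul_assoc b, hexp]
    field_simp
  have hexp : rexp (c * t) * rexp (-((b + c) * t)) = rexp (-(b * t)) := by
    rw [← exp_add]; ring_nf
  rw [expMeasure_eq_withDensity, setLIntegral_withDensity_eq_setLIntegral_mul _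
      (measurable_exponentialPDF b) (by fun_prop) measurableSet_Ioi, Pi.mul_def,
    setLIntegral_congr_fun measurableSet_Ioi htilt,
    lintegral_const_mul _ (measurable_exponentialPDF _), ← withDensity_apply _ measurableSet_Ioi,
    ← expMeasure_eq_withDensity, measure_congr Ioi_ae_eq_Ici, expMeasure_Ici hbc, max_eq_left ht,
    ← ENNReal.ofReal_mul (by positivity), ← hexp]
  ring_nf

lemma lintegral_exp_neg_mul_max_sub_expMeasure {b c t : ℝ} (hb : 0 < b) (hc : 0 ≤ c)
    (ht : 0 ≤ t) :
    ∫⁻ s, ENNReal.ofReal (rexp (-(c * max (s - t) 0))) ∂expMeasure b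
      = ENNReal.ofReal (1 - rexp (-(b * t)) + rexp (-(b * t)) * (b / (b + c))) := by
  have := isProbabilityMeasure_expMeasure hb
  rw [← lintegral_add_compl _ measurableSet_Iic, compl_Iic,
    setLIntegral_congr_fun measurableSet_Iic fun s (hs : s ≤ t) => by
      rw [max_eq_right (sub_nonpos.2 hs), mul_zero, neg_zero, exp_zero, ENNReal.ofReal_one],
    setLIntegral_congr_fun measurableSet_Ioi fun s (hs : t < s) => by
      rw [max_eq_left (sub_nonneg.2 hs.le)],
    setLIntegral_one, ← ofReal_cdf, cdf_expMeasure_eq hb, if_pos ht,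
    setLIntegral_Ioi_exp_neg_mul_sub_expMeasure hb hc ht,
    ← ENNReal.ofReal_add (sub_nonneg.2 (exp_le_one_iff.2 (neg_nonpos.2 (by positivity))))
      (by positivity)]

end ProbabilityTheory

lemma MeasureTheory.Measure.pi_setOf_forall_ne_sub_le {n : ℕ} (ν : Fin (n + 1) → Measure ℝ)
    [∀ i, SigmaFinite (ν i)] (l : Fin (n + 1)) (t : ℝ) :
    Measure.pi ν {x | ∀ i ≠ l, x l - t ≤ x i}
      = ∫⁻ s, ∏ j, ν (l.succAbove j) (Ici (s - t)) ∂ν l := by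
  set B : Set (ℝ × (Fin n → ℝ)) := {p | ∀ j, p.1 - t ≤ p.2 j}
  have hB : MeasurableSet B := by
    simp only [B, ofPred_forall]
    exact .iInter fun j => measurableSet_le (by fun_prop) (by fun_prop)
  have hpre : {x | ∀ i ≠ l, x l - t ≤ x i} = MeasurableEquiv.piFinSuccAbove _ l ⁻¹' B := by
    ext x; simp [B, l.forall_iff_succAbove, Fin.removeNth]
  rw [hpre, (measurePreserving_piFinSuccAbove ν l).measure_preimage hB.nullMeasurableSet,
    Measure.prod_apply hB]
  congr! with s
  have hsection : Prod.mk s ⁻¹' B = univ.pi fun _ => Ici (s - t) := by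
    ext; simp [B, Pi.le_def]
  rw [hsection, Measure.pi_pi]

theorem transmission_probability_general (M : ℕ)
    {Ω : Type*} [MeasurableSpace Ω] (μ : Measure Ω) [IsProbabilityMeasure μ]
    (r : Fin M → ℝ) (hr : ∀ i, 0 < r i) (ET : ℝ) (hET : 0 < ET)
    (ts : ℝ) (hts : 0 ≤ ts)
    (S : Fin M → Ω → ℝ) (hmeas : ∀ i, Measurable (S i))
    (hindep : iIndepFun S μ)
    (hdist : ∀ i, μ.map (S i) = expMeasure (r i / ET))
    (l : Fin M) :
    μ {ω | ∀ i, i ≠ l → S i ω ≥ S l ω - ts}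
      = ENNReal.ofReal (1 - Real.exp (-(r l * ts / ET))
          + Real.exp (-(r l * ts / ET)) * (r l / ∑ i, r i)) := by
  obtain ⟨n, rfl⟩ := Nat.exists_eq_add_one.2 l.pos
  have hb : ∀ i, 0 < r i / ET := fun i => div_pos (hr i) hET
  have _ (i) : IsProbabilityMeasure (expMeasure (r i / ET)) :=
    isProbabilityMeasure_expMeasure (hb i)
  have hlaw : μ.map (fun ω i => S i ω) = Measure.pi fun i => expMeasure (r i / ET) := by
    simpa only [hdist] using hindep.map_fun_eq_pi_map fun i => (hmeas i).aemeasurable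
  have hevent : MeasurableSet {x : Fin (n + 1) → ℝ | ∀ i ≠ l, x l - ts ≤ x i} := by
    simp only [ofPred_forall]
    exact .iInter fun i => .iInter fun _ => measurableSet_le (by fun_prop) (by fun_prop)
  have hrate : r l / ET + ∑ j, r (l.succAbove j) / ET = (∑ i, r i) / ET := by
    rw [Fin.sum_univ_succAbove r l, ← Finset.sum_div, add_div]
  change μ ((fun ω i => S i ω) ⁻¹' {x | ∀ i ≠ l, x l - ts ≤ x i}) = _
  rw [← Measure.map_apply (measurable_pi_lambda _ hmeas) hevent, hlaw,
    Measure.pi_setOf_forall_ne_sub_le]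
  simp_rw [prod_expMeasure_Ici fun j => hb (l.succAbove j)]
  rw [lintegral_exp_neg_mul_max_sub_expMeasure (hb l)
      (Finset.sum_nonneg fun j _ => (hb _).le) hts,
    hrate, div_div_div_cancel_right₀ hET.ne', div_mul_eq_mul_div]

theorem transmission_probability (M : ℕ) (hM : 0 < M)
    {Ω : Type*} [MeasurableSpace Ω] (μ : Measure Ω) [IsProbabilityMeasure μ]
    (r : Fin M → ℝ) (hr : ∀ i, 0 < r i) (ET : ℝ) (hET : 0 < ET)
    (ts : ℝ) (hts : 0 ≤ ts)
    (S : Fin M → Ω → ℝ) (hmeas : ∀ i, Measurable (S i))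
    (hindep : iIndepFun S μ)
    (hdist : ∀ i, μ.map (S i) = expMeasure (r i / ET))
    (l : Fin M) :
    μ {ω | ∀ i, i ≠ l → S i ω ≥ S l ω - ts}
      = ENNReal.ofReal (1 - Real.exp (-(r l * ts / ET))
          + Real.exp (-(r l * ts / ET)) * (r l / ∑ i, r i)) :=
  transmission_probability_general M μ r hr ET hET ts hts S hmeas hindep hdist l
end
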